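/- Let γ > 1, d ≥ 1, and s⁰ ∈ ℝ, and let p(ρ, m, E) = (γ−1)(E − |m|²/(2ρ)). Let U_x = (ρ_x, m_x, E_x), x ∈ D, be a finite nonempty family of states with ρ_x > 0 for all x, and let Ū = (ρ̄, m̄, Ē) be a state with ρ̄ > 0 and p(Ū) > exp(s⁰) ρ̄^γ. Define a_x = p(U_x) − exp(s⁰) ρ_x^γ, ā = p(Ū) − exp(s⁰) ρ̄^γ, τ = min{0, min_{x∈D} a_x}, and ε = τ/(τ − ā). Then ε ∈ [0,1), and for every x ∈ D the limited state ᴸU_x = (1−ε)U_x + εŪ has positive density ρ(ᴸU_x) > 0 and satisfies the entropy constraint p(ᴸU_x) ≥ exp(s⁰) ρ(ᴸU_x)^γ; equivalently, the physical entropy s(ᴸU_x) = ln p(ᴸU_x) − γ ln ρ(ᴸU_x) satisfies s(ᴸU_x) ≥ s⁰. -/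

import Mathlib

/-!
The pressure is concave in the conservative variables, because the kinetic energy `‖m‖² / ρ` is
jointly convex (the perspective of `‖·‖²`), and `ρ ↦ ρ ^ γ` is convex for `γ ≥ 1`; hence the
entropy excess `p(U) − exp(s⁰) ρ ^ γ` is concave. Along the segment from `U_x` to `Ū` it therefore
lies above the chord from `a_x ≥ τ` to `ā > 0`, and `ε = τ / (τ − ā)` is exactly the parameter
at which the chord from `τ` to `ā` crosses zero.
-/

/-- The ideal-gas pressure `p(ρ, m, E) = (γ − 1)(E − |m|²/(2ρ))` of a
conservative Euler state `(ρ, m, E) ∈ ℝ × ℝ^d × ℝ`. -/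
noncomputable def eulerPressure (γ : ℝ) {d : ℕ}
    (ρ : ℝ) (m : EuclideanSpace ℝ (Fin d)) (E : ℝ) : ℝ :=
  (γ - 1) * (E - ‖m‖ ^ 2 / (2 * ρ))

open Real Set

theorem convexOn_norm_sq_div {F : Type*} [NormedAddCommGroup F] [InnerProductSpace ℝ F] :
    ConvexOn ℝ (Ioi 0 ×ˢ univ) fun z : ℝ × F ↦ ‖z.2‖ ^ 2 / z.1 := by
  refine ⟨(convex_Ioi 0).prod convex_univ, ?_⟩
  rintro ⟨a, u⟩ ⟨ha, -⟩ ⟨b, v⟩ ⟨hb, -⟩ s t hs ht hst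
  simp only [mem_Ioi] at ha hb
  simp only [Prod.smul_mk, Prod.mk_add_mk, smul_eq_mul]
  have hden : 0 < s * a + t * b := (convex_Ioi (0 : ℝ)) ha hb hs ht hst
  -- the gap between the two sides is `s t ‖b u − a v‖² / (a b)`
  have hgap : 0 ≤ s * t * ‖b • u - a • v‖ ^ 2 / (a * b) := by positivity
  rw [norm_sub_sq_real, norm_smul, norm_smul, real_inner_smul_left, real_inner_smul_right,
    norm_of_nonneg ha.le, norm_of_nonneg hb.le] at hgap
  rw [div_le_iff₀ hden, norm_add_sq_real, norm_smul, norm_smul, real_inner_smul_left,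
    real_inner_smul_right, norm_of_nonneg hs, norm_of_nonneg ht]
  field_simp at hgap ⊢
  linarith [hgap]

section Pressure

variable {γ : ℝ} {d : ℕ} {ρ₁ ρ₂ E₁ E₂ s t : ℝ} {m₁ m₂ : EuclideanSpace ℝ (Fin d)}

theorem eulerPressure_concave (hγ : 1 ≤ γ) (hρ₁ : 0 < ρ₁) (hρ₂ : 0 < ρ₂)
    (hs : 0 ≤ s) (ht : 0 ≤ t) (hst : s + t = 1) :
    s * eulerPressure γ ρ₁ m₁ E₁ + t * eulerPressure γ ρ₂ m₂ E₂ ≤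
      eulerPressure γ (s * ρ₁ + t * ρ₂) (s • m₁ + t • m₂) (s * E₁ + t * E₂) := by
  have hkin := convexOn_norm_sq_div.2 (mk_mem_prod (mem_Ioi.2 hρ₁) (mem_univ m₁))
    (mk_mem_prod (mem_Ioi.2 hρ₂) (mem_univ m₂)) hs ht hst
  simp only [Prod.smul_mk, Prod.mk_add_mk, smul_eq_mul] at hkin
  simp only [eulerPressure, div_mul_eq_div_div_swap]
  nlinarith [mul_le_mul_of_nonneg_left hkin (sub_nonneg.2 hγ)]

/-- The paper's `a(U)`; for `ρ > 0` it is nonnegative exactly when `s(U) ≥ s⁰`. -/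
noncomputable def entropyExcess (γ s0 ρ : ℝ) (m : EuclideanSpace ℝ (Fin d)) (E : ℝ) : ℝ :=
  eulerPressure γ ρ m E - exp s0 * ρ ^ γ

theorem entropyExcess_concave (s0 : ℝ) (hγ : 1 ≤ γ) (hρ₁ : 0 < ρ₁) (hρ₂ : 0 < ρ₂)
    (hs : 0 ≤ s) (ht : 0 ≤ t) (hst : s + t = 1) :
    s * entropyExcess γ s0 ρ₁ m₁ E₁ + t * entropyExcess γ s0 ρ₂ m₂ E₂ ≤
      entropyExcess γ s0 (s * ρ₁ + t * ρ₂) (s • m₁ + t • m₂) (s * E₁ + t * E₂) := by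
  have hpress := eulerPressure_concave (m₁ := m₁) (m₂ := m₂) (E₁ := E₁) (E₂ := E₂)
    hγ hρ₁ hρ₂ hs ht hst
  have hrpow : (s * ρ₁ + t * ρ₂) ^ γ ≤ s * ρ₁ ^ γ + t * ρ₂ ^ γ :=
    (convexOn_rpow hγ).2 hρ₁.le hρ₂.le hs ht hst
  unfold entropyExcess
  nlinarith [mul_le_mul_of_nonneg_left hrpow (exp_pos s0).le]

theorem le_log_sub_mul_log_of_exp_mul_rpow_le {ρ p s0 : ℝ} (hρ : 0 < ρ)
    (h : exp s0 * ρ ^ γ ≤ p) : s0 ≤ log p - γ * log ρ := by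
  have hlog := log_le_log (by positivity) h
  rw [log_mul (exp_pos s0).ne' (rpow_pos_of_pos hρ γ).ne', log_exp, log_rpow hρ] at hlog
  linarith

end Pressure

section ScalingCoefficient

variable {τ abar : ℝ}

theorem scalingCoeff_mem_Ico (hτ : τ ≤ 0) (habar : 0 < abar) : τ / (τ - abar) ∈ Ico 0 1 := by
  have hden : τ - abar < 0 := by linarith
  exact ⟨div_nonneg_of_nonpos hτ hden.le, (div_lt_one_of_neg hden).2 (by linarith)⟩

theorem scalingCoeff_combination_nonneg {a : ℝ} (hτ : τ ≤ 0) (habar : 0 < abar) (ha : τ ≤ a) :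
    0 ≤ (1 - τ / (τ - abar)) * a + τ / (τ - abar) * abar := by
  have hden : τ - abar ≠ 0 := by linarith
  have hε1 : τ / (τ - abar) < 1 := (scalingCoeff_mem_Ico hτ habar).2
  have hchord : (1 - τ / (τ - abar)) * τ + τ / (τ - abar) * abar = 0 := by
    field_simp
    ring
  nlinarith [mul_le_mul_of_nonneg_left ha (sub_nonneg.2 hε1.le)]

end ScalingCoefficient

theorem entropy_bounding_limiter_general
    (γ : ℝ) (hγ : 1 < γ) (d : ℕ) (s0 : ℝ)
    {D : Type*} [Fintype D] [Nonempty D]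
    (ρ : D → ℝ) (m : D → EuclideanSpace ℝ (Fin d)) (E : D → ℝ)
    (hρ : ∀ x, 0 < ρ x)
    (ρb : ℝ) (mb : EuclideanSpace ℝ (Fin d)) (Eb : ℝ)
    (hρb : 0 < ρb)
    (hpb : eulerPressure γ ρb mb Eb > Real.exp s0 * ρb ^ γ)
    (a : D → ℝ)
    (ha : ∀ x, a x = eulerPressure γ (ρ x) (m x) (E x) - Real.exp s0 * ρ x ^ γ)
    (abar : ℝ) (habar : abar = eulerPressure γ ρb mb Eb - Real.exp s0 * ρb ^ γ)
    (τ ε : ℝ)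
    (hτ : τ = min 0 (Finset.univ.inf' Finset.univ_nonempty a))
    (hε : ε = τ / (τ - abar)) :
    0 ≤ ε ∧ ε < 1 ∧
    ∀ x : D,
      0 < (1 - ε) * ρ x + ε * ρb ∧
      eulerPressure γ ((1 - ε) * ρ x + ε * ρb) ((1 - ε) • m x + ε • mb)
          ((1 - ε) * E x + ε * Eb) ≥
        Real.exp s0 * ((1 - ε) * ρ x + ε * ρb) ^ γ ∧
      Real.log (eulerPressure γ ((1 - ε) * ρ x + ε * ρb)
            ((1 - ε) • m x + ε • mb) ((1 - ε) * E x + ε * Eb)) -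
          γ * Real.log ((1 - ε) * ρ x + ε * ρb) ≥ s0 := by
  have habar_pos : 0 < abar := habar ▸ sub_pos.2 hpb
  have hτ0 : τ ≤ 0 := hτ ▸ min_le_left _ _
  have hτa (x : D) : τ ≤ a x :=
    hτ ▸ (min_le_right _ _).trans (Finset.inf'_le _ (Finset.mem_univ x))
  obtain ⟨hε0, hε1⟩ : ε ∈ Ico 0 1 := hε ▸ scalingCoeff_mem_Ico hτ0 habar_pos
  refine ⟨hε0, hε1, fun x => ?_⟩
  have hweights : (1 - ε) + ε = 1 := sub_add_cancel 1 ε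
  have hdens : 0 < (1 - ε) * ρ x + ε * ρb :=
    (convex_Ioi (0 : ℝ)) (hρ x) hρb (sub_nonneg.2 hε1.le) hε0 hweights
  have hexcess : 0 ≤ entropyExcess γ s0 ((1 - ε) * ρ x + ε * ρb) ((1 - ε) • m x + ε • mb)
      ((1 - ε) * E x + ε * Eb) := by
    refine le_trans ?_ (entropyExcess_concave s0 hγ.le (hρ x) hρb (sub_nonneg.2 hε1.le) hε0
      hweights)
    have := scalingCoeff_combination_nonneg hτ0 habar_pos (hτa x)
    rwa [← hε, ha x, habar] at this
  have hbound := sub_nonneg.1 hexcess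
  exact ⟨hdens, hbound, le_log_sub_mul_log_of_exp_mul_rpow_le hdens hbound⟩

/-- the entropy-bounding limiter works: given point states
`U_x = (ρ_x, m_x, E_x)` with positive densities and an average state `Ū` with
`ρ̄ > 0` and `p(Ū) > exp(s⁰) ρ̄^γ`, the linear-scaling coefficient
`ε = τ/(τ − ā)` with `τ = min{0, min_x (p(U_x) − exp(s⁰)ρ_x^γ)}` and
`ā = p(Ū) − exp(s⁰)ρ̄^γ` lies in `[0,1)`, and every limited state
`ᴸU_x = (1−ε)U_x + εŪ` has positive density and satisfies
`p(ᴸU_x) ≥ exp(s⁰) ρ(ᴸU_x)^γ`, equivalently `s(ᴸU_x) ≥ s⁰`. -/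
theorem entropy_bounding_limiter
    (γ : ℝ) (hγ : 1 < γ) (d : ℕ) (hd : 1 ≤ d) (s0 : ℝ)
    {D : Type*} [Fintype D] [Nonempty D]
    (ρ : D → ℝ) (m : D → EuclideanSpace ℝ (Fin d)) (E : D → ℝ)
    (hρ : ∀ x, 0 < ρ x)
    (ρb : ℝ) (mb : EuclideanSpace ℝ (Fin d)) (Eb : ℝ)
    (hρb : 0 < ρb)
    (hpb : eulerPressure γ ρb mb Eb > Real.exp s0 * ρb ^ γ)
    (a : D → ℝ)
    (ha : ∀ x, a x = eulerPressure γ (ρ x) (m x) (E x) - Real.exp s0 * ρ x ^ γ)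
    (abar : ℝ) (habar : abar = eulerPressure γ ρb mb Eb - Real.exp s0 * ρb ^ γ)
    (τ ε : ℝ)
    (hτ : τ = min 0 (Finset.univ.inf' Finset.univ_nonempty a))
    (hε : ε = τ / (τ - abar)) :
    0 ≤ ε ∧ ε < 1 ∧
    ∀ x : D,
      0 < (1 - ε) * ρ x + ε * ρb ∧
      eulerPressure γ ((1 - ε) * ρ x + ε * ρb) ((1 - ε) • m x + ε • mb)
          ((1 - ε) * E x + ε * Eb) ≥
        Real.exp s0 * ((1 - ε) * ρ x + ε * ρb) ^ γ ∧
      Real.log (eulerPressure γ ((1 - ε) * ρ x + ε * ρb)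
            ((1 - ε) • m x + ε • mb) ((1 - ε) * E x + ε * Eb)) -
          γ * Real.log ((1 - ε) * ρ x + ε * ρb) ≥ s0 :=
  entropy_bounding_limiter_general γ hγ d s0 ρ m E hρ ρb mb Eb hρb hpb a ha abar habar τ ε hτ hε
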